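/- Let C = x_0, x_1, …, x_{n−1}, x_0 be a cycle of length n with n ≠ 5, let a, b, c be three pairwise distinct colors, and let i, j be integers with 2 ≤ i < j ≤ n−2 such that j − i is even and j − i ≥ 2. Then there exists a 3-star edge coloring f of C using the colors {a, b, c} such that the two edges incident with x_i receive the colors a and b (i.e., {f(x_{i−1}x_i), f(x_ix_{i+1})} = {a, b}) and the two edges incident with x_j receive the colors b and c (i.e., {f(x_{j−1}x_j), f(x_jx_{j+1})} = {b, c}). -/

import Mathlib

/-!
Colour the edge `x_t x_{t+1}` by the partial sum `s 0 + ⋯ + s (t - 1)` in `ZMod 3` of a sequence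
of nonzero steps. Consecutive colours then differ, and four consecutive edges are coloured
`x y x y` exactly when the steps alternate `1 2 1` or `2 1 2`. Steps equal to `1` except on one
block of `2`s never alternate, as long as the block and its complement on the cycle both have
length at least two. The block is placed so that the steps add up to `0` around the cycle and the
edges at `x_i` and `x_j` get the colours `0, 1` and `2, 1`; relabelling `0, 1, 2` as `a, b, c`
finishes the proof.
-/

/-- A 3-star edge coloring of the cycle `x_0, x_1, …, x_{n-1}, x_0`, where the edge
`x_i x_{i+1}` (indices mod `n`) receives color `g i`: the coloring is proper
(adjacent edges get distinct colors) and no path or cycle with four edges is bicolored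
(for a proper coloring this means no four consecutive edges are colored `a b a b`). -/
def IsStarEdgeColoringCycle {α : Type*} (n : ℕ) (g : ZMod n → α) : Prop :=
  (∀ i, g i ≠ g (i + 1)) ∧ ∀ i, ¬ (g i = g (i + 2) ∧ g (i + 1) = g (i + 3))

open Finset Function

theorem Function.Periodic.apply_val_natCast {α : Type*} {n : ℕ} {F : ℕ → α}
    (hF : Periodic F n) (t : ℕ) : F (t : ZMod n).val = F t := by
  rw [ZMod.val_natCast, hF.map_mod_nat]

namespace IsStarEdgeColoringCycle

variable {α β : Type*} {n : ℕ}

theorem comp {g : ZMod n → α} (hg : IsStarEdgeColoringCycle n g) {e : α → β}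
    (he : Injective e) : IsStarEdgeColoringCycle n (e ∘ g) :=
  ⟨fun x h => hg.1 x (he h), fun x h => hg.2 x ⟨he h.1, he h.2⟩⟩

theorem comp_sub_right {g : ZMod n → α} (hg : IsStarEdgeColoringCycle n g) (d : ZMod n) :
    IsStarEdgeColoringCycle n (fun x => g (x - d)) :=
  ⟨fun x => by simpa only [sub_add_eq_add_sub] using hg.1 (x - d),
    fun x => by simpa only [sub_add_eq_add_sub] using hg.2 (x - d)⟩

theorem of_periodic [NeZero n] {F : ℕ → α} (hF : Periodic F n)
    (hproper : ∀ t, F t ≠ F (t + 1))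
    (hstar : ∀ t, ¬ (F t = F (t + 2) ∧ F (t + 1) = F (t + 3))) :
    IsStarEdgeColoringCycle n (fun x => F x.val) := by
  have hval (t k : ℕ) : F ((t : ZMod n) + k).val = F (t + k) := by
    rw [← Nat.cast_add, hF.apply_val_natCast]
  have h1 := fun t => hval t 1
  have h2 := fun t => hval t 2
  have h3 := fun t => hval t 3
  simp only [Nat.cast_one, Nat.cast_ofNat] at h1 h2 h3
  constructor <;> intro x <;> obtain ⟨t, rfl⟩ := ZMod.natCast_zmod_surjective x <;>
    simp only [hF.apply_val_natCast, h1, h2, h3]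
  exacts [hproper t, hstar t]

end IsStarEdgeColoringCycle

def partialSums {M : Type*} [AddCommMonoid M] (s : ℕ → M) (t : ℕ) : M :=
  ∑ r ∈ range t, s r

section partialSums

variable {M : Type*} [AddCommGroup M] {s : ℕ → M}

theorem periodic_partialSums {n : ℕ} (hs : Periodic s n) (hsum : ∑ r ∈ range n, s r = 0) :
    Periodic (partialSums s) n := by
  have hwindow (t : ℕ) : ∑ k ∈ range n, s (t + k) = 0 := by
    induction t with
    | zero => simpa using hsum
    | succ t ih =>
      have h := (sum_range_succ' (fun k => s (t + k)) n).symm.trans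
        (sum_range_succ _ n)
      rw [add_zero, hs t, add_left_inj] at h
      simpa only [add_assoc, add_comm 1] using h.trans ih
  intro t
  rw [partialSums, sum_range_add, hwindow, add_zero, partialSums]

theorem partialSums_add_two (t : ℕ) :
    partialSums s (t + 2) = partialSums s t + (s t + s (t + 1)) := by
  simp only [partialSums, sum_range_succ, add_assoc]

theorem partialSums_ne_partialSums_succ (hs : ∀ t, s t ≠ 0) (t : ℕ) :
    partialSums s t ≠ partialSums s (t + 1) := by
  simpa only [partialSums, sum_range_succ, ne_eq, left_eq_add] using hs t

theorem partialSums_not_bicolored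
    (hs : ∀ t, ¬ (s t + s (t + 1) = 0 ∧ s (t + 1) + s (t + 2) = 0)) (t : ℕ) :
    ¬ (partialSums s t = partialSums s (t + 2) ∧
      partialSums s (t + 1) = partialSums s (t + 3)) := by
  simpa only [partialSums_add_two, left_eq_add, add_assoc] using hs t

end partialSums

theorem ZMod.add_eq_zero_iff_ne_of_three {x y : ZMod 3} (hx : x ≠ 0) (hy : y ≠ 0) :
    x + y = 0 ↔ x ≠ y := by
  revert x y; decide

def blockStep (n p q t : ℕ) : ZMod 3 := if p ≤ t % n ∧ t % n < p + q then 2 else 1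

section blockStep

variable {n p q : ℕ}

theorem blockStep_ne_zero (t : ℕ) : blockStep n p q t ≠ 0 := by
  unfold blockStep; split_ifs <;> decide

theorem blockStep_periodic : Periodic (blockStep n p q) n := by
  intro t; simp only [blockStep, Nat.add_mod_right]

theorem blockStep_not_alternating (hq : 2 ≤ q) (hqn : q + 2 ≤ n) (hpq : p + q ≤ n) (t : ℕ) :
    blockStep n p q t = blockStep n p q (t + 1) ∨
      blockStep n p q (t + 1) = blockStep n p q (t + 2) := by
  have hlt := Nat.mod_lt t (by omega : 0 < n)
  have h1 : (t + 1) % n = if n ≤ t % n + 1 then t % n + 1 - n else t % n + 1 := by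
    rw [Nat.add_mod_eq_ite, Nat.mod_eq_of_lt (by omega : 1 < n)]
  have h2 : (t + 2) % n = if n ≤ t % n + 2 then t % n + 2 - n else t % n + 2 := by
    rw [Nat.add_mod_eq_ite, Nat.mod_eq_of_lt (by omega : 2 < n)]
  unfold blockStep
  rw [h1, h2]
  split_ifs <;> first | (left; rfl) | (right; rfl) | omega

-- `min t (p + q) - p` (truncated) is the number of `2`s among the first `t` steps.
theorem partialSums_blockStep {t : ℕ} (ht : t ≤ n) :
    partialSums (blockStep n p q) t = ((t + (min t (p + q) - p) : ℕ) : ZMod 3) := by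
  induction t with
  | zero => simp [partialSums]
  | succ t ih =>
    rw [partialSums, sum_range_succ, ← partialSums, ih (by omega), blockStep,
      Nat.mod_eq_of_lt (by omega : t < n)]
    split_ifs with h
    · rw [show t + 1 + (min (t + 1) (p + q) - p) = t + (min t (p + q) - p) + 2 by omega]
      push_cast; rfl
    · rw [show t + 1 + (min (t + 1) (p + q) - p) = t + (min t (p + q) - p) + 1 by omega]
      push_cast; rfl

end blockStep

theorem exists_blockStep_params {m n : ℕ} (hm : 2 ≤ m) (hmn : m + 4 ≤ n) :
    ∃ p q : ℕ, 1 ≤ p ∧ p ≤ m ∧ m < p + q ∧ 2 ≤ q ∧ q + 2 ≤ n ∧ p + q ≤ n ∧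
      (n + q) % 3 = 0 ∧ (2 * m - p) % 3 = 2 := by
  -- `p ∈ {m - 2, m - 1, m}` makes `2 * m - p ≡ 2`, and `q ∈ {2, …, 5}` makes `n + q ≡ 0`
  -- (mod 3), with `q ≥ 3` when `p = m - 2`.
  refine ⟨m - (2 * m + 2) % 3, ?_⟩
  obtain h | h | h | h :
      n % 3 = 0 ∨ n % 3 = 1 ∧ m % 3 = 0 ∨ n % 3 = 1 ∧ m % 3 ≠ 0 ∨ n % 3 = 2 := by omega
  exacts [⟨3, by omega⟩, ⟨5, by omega⟩, ⟨2, by omega⟩, ⟨4, by omega⟩]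

theorem exists_starEdgeColoringCycle_zmod_three {n m : ℕ} (hm : 2 ≤ m) (hmn : m + 4 ≤ n) :
    ∃ g : ZMod n → ZMod 3, IsStarEdgeColoringCycle n g ∧
      g 0 = 0 ∧ g 1 = 1 ∧ g m = 2 ∧ g (m + 1) = 1 := by
  obtain ⟨p, q, hp, hpm, hmpq, hq, hqn, hpqn, hnq, hm3⟩ := exists_blockStep_params hm hmn
  have : NeZero n := ⟨by omega⟩
  have hcast {x k : ℕ} (h : x % 3 = k) : (x : ZMod 3) = k := by rw [← ZMod.natCast_mod, h]
  have hsum : ∑ r ∈ range n, blockStep n p q r = 0 := by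
    rw [← partialSums, partialSums_blockStep le_rfl, hcast (k := 0) (by omega),
      Nat.cast_zero]
  have hper := periodic_partialSums blockStep_periodic hsum
  have hcolor {t k : ℕ} (ht : t ≤ n) (hk : (t + (min t (p + q) - p)) % 3 = k) :
      partialSums (blockStep n p q) (t : ZMod n).val = k := by
    rw [hper.apply_val_natCast, partialSums_blockStep ht, hcast hk]
  refine ⟨fun x => partialSums (blockStep n p q) x.val,
    .of_periodic hper (partialSums_ne_partialSums_succ blockStep_ne_zero)
      (partialSums_not_bicolored ?_),
    by simpa using hcolor (t := 0) (k := 0) (by omega) (by omega),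
    by simpa using hcolor (t := 1) (k := 1) (by omega) (by omega),
    by simpa using hcolor (t := m) (k := 2) (by omega) (by omega),
    by simpa using hcolor (t := m + 1) (k := 1) (by omega) (by omega)⟩
  intro t
  simp only [ZMod.add_eq_zero_iff_ne_of_three (blockStep_ne_zero _) (blockStep_ne_zero _)]
  have := blockStep_not_alternating hq hqn hpqn t
  tauto

theorem exists_injective_zmod_three {α : Type*} {a b c : α} (hab : a ≠ b) (hac : a ≠ c)
    (hbc : b ≠ c) :
    ∃ e : ZMod 3 → α, Injective e ∧ (∀ x, e x ∈ ({a, b, c} : Set α)) ∧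
      e 0 = a ∧ e 1 = b ∧ e 2 = c := by
  refine ⟨![a, b, c] ∘ (ZMod.finEquiv 3).symm, ?_, fun x => ?_, ?_, ?_, ?_⟩
  · refine Injective.comp ?_ (ZMod.finEquiv 3).symm.injective
    intro x y
    fin_cases x <;> fin_cases y <;> simp [hab, hac, hbc, hab.symm, hac.symm, hbc.symm]
  · simp only [comp_apply]
    generalize (ZMod.finEquiv 3).symm x = y
    fin_cases y <;> simp
  all_goals rfl

theorem stmt_6_general {α : Type*} (n : ℕ)
    (a b c : α) (hab : a ≠ b) (hac : a ≠ c) (hbc : b ≠ c)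
    (i j : ℕ) (hi : 2 ≤ i) (hj : j ≤ n - 2)
    (hge : 2 ≤ j - i) :
    ∃ g : ZMod n → α, (∀ r, g r ∈ ({a, b, c} : Set α)) ∧
      IsStarEdgeColoringCycle n g ∧
      ({g ((i : ZMod n) - 1), g (i : ZMod n)} : Set α) = {a, b} ∧
      ({g ((j : ZMod n) - 1), g (j : ZMod n)} : Set α) = {b, c} := by
  obtain ⟨g, hg, hi₀, hi₁, hj₀, hj₁⟩ :=
    exists_starEdgeColoringCycle_zmod_three (n := n) hge (by omega)
  obtain ⟨e, he, hmem, ha, hb, hc⟩ := exists_injective_zmod_three hab hac hbc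
  have hji : ((j - i : ℕ) : ZMod n) = j - i := Nat.cast_sub (by omega)
  refine ⟨fun x => e (g (x - (i - 1))), fun r => hmem _,
    (hg.comp_sub_right _).comp he, ?_, ?_⟩
  · dsimp only
    rw [sub_self, sub_sub_cancel, hi₀, hi₁, ha, hb]
  · dsimp only
    rw [sub_sub_sub_cancel_right, ← hji, hj₀,
        show (j : ZMod n) - (i - 1) = (j - i : ℕ) + 1 by rw [hji]; ring, hj₁, hb, hc,
        Set.pair_comm]

theorem stmt_6 {α : Type*} (n : ℕ) (hn5 : n ≠ 5)
    (a b c : α) (hab : a ≠ b) (hac : a ≠ c) (hbc : b ≠ c)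
    (i j : ℕ) (hi : 2 ≤ i) (hij : i < j) (hj : j ≤ n - 2)
    (heven : Even (j - i)) (hge : 2 ≤ j - i) :
    ∃ g : ZMod n → α, (∀ r, g r ∈ ({a, b, c} : Set α)) ∧
      IsStarEdgeColoringCycle n g ∧
      ({g ((i : ZMod n) - 1), g (i : ZMod n)} : Set α) = {a, b} ∧
      ({g ((j : ZMod n) - 1), g (j : ZMod n)} : Set α) = {b, c} :=
  stmt_6_general n a b c hab hac hbc i j hi hj hge
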